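/- arXiv:1701.07965 — 2 statements merged into one kernel-verified Lean document; each statement's English description precedes it below -/
import Mathlib

section
/- Let (X,d) be a complete and bounded metric space, I a nonempty finite set, φ : [0,∞) → [0,∞) a comparison function, and for each i ∈ I let f_i : X → X be a φ-contraction. For each infinite word α ∈ Λ(I), let a_α denote the unique element of ⋂_{n∈ℕ*} X_{[α]_n}. If α, β ∈ Λ(I) satisfy a_α ≠ a_β, then there exists n₀ ∈ ℕ* such that X_{[α]_{n₀}} ∩ X_{[β]_{n₀}} = ∅. -/
open Filter Topology Set

/-- `φ : [0,∞) → [0,∞)` is a comparison function: it maps `[0,∞)` into `[0,∞)`,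
is increasing, satisfies `φ t < t` for `t > 0`, and is right-continuous. -/
def IsComparisonFn (φ : ℝ → ℝ) : Prop :=
  (∀ t : ℝ, 0 ≤ t → 0 ≤ φ t) ∧
  MonotoneOn φ (Set.Ici (0 : ℝ)) ∧
  (∀ t : ℝ, 0 < t → φ t < t) ∧
  (∀ t : ℝ, 0 ≤ t → ContinuousWithinAt φ (Set.Ici t) t)

/-- `f_{α₁…αₙ} = f_{α₁} ∘ f_{α₂} ∘ … ∘ f_{αₙ}` (the identity for the empty word). -/
def WordMap {X I : Type*} (f : I → X → X) : List I → X → X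
  | [] => id
  | i :: w => f i ∘ WordMap f w

/-- `[α]_n`: the finite word consisting of the first `n` letters of the infinite word `α`. -/
def Pref {I : Type*} (α : ℕ → I) (n : ℕ) : List I := List.ofFn (fun k : Fin n => α (k : ℕ))

/-- `X_w = f_w(X)`, the image of the whole space under the word map. -/
def WordSet {X I : Type*} (f : I → X → X) (w : List I) : Set X := Set.range (WordMap f w)

/-- A family `(f_i)_{i ∈ I}` of self-maps of `X` has attractor if:
(a) for every infinite word `α`, `⋂ₙ X_{[α]ₙ}` has a unique element `a_α`;
(b) whenever `a_α ≠ a_β`, some `X_{[α]_{n₀}}` and `X_{[β]_{n₀}}` are disjoint. -/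
def HasAttractor {X I : Type*} (f : I → X → X) : Prop :=
  (∀ α : ℕ → I, ∃! a : X, ∀ n : ℕ, a ∈ WordSet f (Pref α n)) ∧
  (∀ α β : ℕ → I, ∀ a b : X,
    (∀ n : ℕ, a ∈ WordSet f (Pref α n)) → (∀ n : ℕ, b ∈ WordSet f (Pref β n)) →
    a ≠ b →
    ∃ n₀ : ℕ, WordSet f (Pref α n₀) ∩ WordSet f (Pref β n₀) = ∅)

/-!
A word map `f_w` of length `n` shrinks distances to at most `φ^[n]` of them, so `X_w` has
diameter at most `φ^[n] (diam X)`, which tends to `0`. Once this bound is below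
`d(a_α, a_β) / 2`, a common point of `X_{[α]_n}` and `X_{[β]_n}` would violate the triangle
inequality.
-/

namespace IsComparisonFn

variable {φ : ℝ → ℝ}

theorem apply_le (hφ : IsComparisonFn φ) {t : ℝ} (ht : 0 ≤ t) : φ t ≤ t := by
  rcases ht.eq_or_lt with rfl | ht
  · refine le_of_forall_pos_lt_add fun ε hε => ?_
    calc φ 0 ≤ φ ε := hφ.2.1 (mem_Ici.2 le_rfl) hε.le hε.le
      _ < ε := hφ.2.2.1 ε hε
      _ = 0 + ε := (zero_add ε).symm
  · exact (hφ.2.2.1 t ht).le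

theorem iterate_nonneg (hφ : IsComparisonFn φ) (n : ℕ) {t : ℝ} (ht : 0 ≤ t) : 0 ≤ φ^[n] t := by
  induction n with
  | zero => exact ht
  | succ n ih => rw [Function.iterate_succ_apply']; exact hφ.1 _ ih

theorem iterate_mono (hφ : IsComparisonFn φ) (n : ℕ) {s t : ℝ} (hs : 0 ≤ s) (hst : s ≤ t) :
    φ^[n] s ≤ φ^[n] t := by
  induction n with
  | zero => exact hst
  | succ n ih =>
    simp only [Function.iterate_succ_apply']
    exact hφ.2.1 (hφ.iterate_nonneg n hs) (hφ.iterate_nonneg n (hs.trans hst)) ih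

/-- The iterates decrease to a limit `L`; right-continuity makes `L` a fixed point of `φ`,
and `φ t < t` for `t > 0` forces `L = 0`. -/
theorem tendsto_iterate_zero (hφ : IsComparisonFn φ) {t : ℝ} (ht : 0 ≤ t) :
    Tendsto (fun n => φ^[n] t) atTop (𝓝 0) := by
  set D : ℕ → ℝ := fun n => φ^[n] t
  have hD_succ : ∀ n, D (n + 1) = φ (D n) := fun n => Function.iterate_succ_apply' φ n t
  have hD_nonneg : ∀ n, 0 ≤ D n := fun n => hφ.iterate_nonneg n ht
  have hD_anti : Antitone D := antitone_nat_of_succ_le fun n => by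
    rw [hD_succ]; exact hφ.apply_le (hD_nonneg n)
  have hD_bdd : BddBelow (range D) := ⟨0, by rintro _ ⟨n, rfl⟩; exact hD_nonneg n⟩
  set L := ⨅ n, D n
  have hL_nonneg : 0 ≤ L := le_ciInf hD_nonneg
  have hD_tendsto : Tendsto D atTop (𝓝[≥] L) :=
    tendsto_nhdsWithin_of_tendsto_nhds_of_eventually_within D
      (tendsto_atTop_ciInf hD_anti hD_bdd) (Eventually.of_forall fun n => ciInf_le hD_bdd n)
  have hL_fixed : φ L = L := by
    refine tendsto_nhds_unique ((hφ.2.2.2 L hL_nonneg).tendsto.comp hD_tendsto) ?_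
    simpa only [Function.comp_def, hD_succ] using
      (tendsto_nhds_of_tendsto_nhdsWithin hD_tendsto).comp (tendsto_add_atTop_nat 1)
  have hL_zero : L = 0 := by
    by_contra hL
    exact (hφ.2.2.1 L (hL_nonneg.lt_of_ne' hL)).ne hL_fixed
  exact hL_zero ▸ tendsto_nhds_of_tendsto_nhdsWithin hD_tendsto

end IsComparisonFn

section WordMap

variable {X I : Type*} [PseudoMetricSpace X] {φ : ℝ → ℝ} {f : I → X → X}

theorem dist_wordMap_le (hφ : IsComparisonFn φ)
    (hf : ∀ i : I, ∀ x y : X, dist (f i x) (f i y) ≤ φ (dist x y)) (w : List I) (x y : X) :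
    dist (WordMap f w x) (WordMap f w y) ≤ φ^[w.length] (dist x y) := by
  induction w with
  | nil => exact le_rfl
  | cons i w ih =>
    rw [List.length_cons, Function.iterate_succ_apply']
    exact (hf i _ _).trans
      (hφ.2.1 dist_nonneg (hφ.iterate_nonneg _ dist_nonneg) ih)

theorem dist_le_of_mem_wordSet (hφ : IsComparisonFn φ)
    (hf : ∀ i : I, ∀ x y : X, dist (f i x) (f i y) ≤ φ (dist x y))
    {C : ℝ} (hC : ∀ x y : X, dist x y ≤ C) {w : List I} {x y : X}
    (hx : x ∈ WordSet f w) (hy : y ∈ WordSet f w) :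
    dist x y ≤ φ^[w.length] C := by
  obtain ⟨u, rfl⟩ := hx
  obtain ⟨v, rfl⟩ := hy
  exact (dist_wordMap_le hφ hf w u v).trans (hφ.iterate_mono _ dist_nonneg (hC u v))

end WordMap

theorem length_pref {I : Type*} (α : ℕ → I) (n : ℕ) : (Pref α n).length = n :=
  List.length_ofFn

theorem ifs_separation_general {X I : Type*} [MetricSpace X]
    (hbdd : ∃ C : ℝ, ∀ x y : X, dist x y ≤ C)
    (φ : ℝ → ℝ) (hφ : IsComparisonFn φ)
    (f : I → X → X) (hf : ∀ i : I, ∀ x y : X, dist (f i x) (f i y) ≤ φ (dist x y)) :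
    ∀ α β : ℕ → I, ∀ a b : X,
      (∀ n : ℕ, a ∈ WordSet f (Pref α n)) → (∀ n : ℕ, b ∈ WordSet f (Pref β n)) →
      a ≠ b →
      ∃ n₀ : ℕ, 0 < n₀ ∧ WordSet f (Pref α n₀) ∩ WordSet f (Pref β n₀) = ∅ := by
  intro α β a b ha hb hab
  obtain ⟨C, hC⟩ := hbdd
  have hC_nonneg : 0 ≤ C := dist_self a ▸ hC a a
  obtain ⟨n, hn_small, hn_pos⟩ := (((hφ.tendsto_iterate_zero hC_nonneg).eventually
    (gt_mem_nhds (half_pos (dist_pos.mpr hab)))).and (eventually_gt_atTop 0)).exists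
  refine ⟨n, hn_pos, eq_empty_iff_forall_notMem.mpr fun z ⟨hzα, hzβ⟩ => ?_⟩
  have haz := dist_le_of_mem_wordSet hφ hf hC (ha n) hzα
  have hbz := dist_le_of_mem_wordSet hφ hf hC (hb n) hzβ
  rw [length_pref] at haz hbz
  linarith [dist_triangle_right a b z]

/-- For an IFS of `φ`-contractions on a complete bounded metric space,
if `a_α ≠ a_β` then `X_{[α]_{n₀}}` and `X_{[β]_{n₀}}` are disjoint for some `n₀ ∈ ℕ*`. -/
theorem ifs_separation {X I : Type*} [MetricSpace X] [CompleteSpace X] [Nonempty X]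
    [Finite I] [Nonempty I]
    (hbdd : ∃ C : ℝ, ∀ x y : X, dist x y ≤ C)
    (φ : ℝ → ℝ) (hφ : IsComparisonFn φ)
    (f : I → X → X) (hf : ∀ i : I, ∀ x y : X, dist (f i x) (f i y) ≤ φ (dist x y)) :
    ∀ α β : ℕ → I, ∀ a b : X,
      (∀ n : ℕ, a ∈ WordSet f (Pref α n)) → (∀ n : ℕ, b ∈ WordSet f (Pref β n)) →
      a ≠ b →
      ∃ n₀ : ℕ, 0 < n₀ ∧ WordSet f (Pref α n₀) ∩ WordSet f (Pref β n₀) = ∅ :=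
  ifs_separation_general hbdd φ hφ f hf
end

section
/- Let X be a set, I a nonempty finite set, and (f_i)_{i∈I} a family of functions f_i : X → X having attractor A. Let F : 𝒫(X) → 𝒫(X) be given by F(C) = ⋃_{i∈I} f_i(C). Then A = {x ∈ X : x ∈ F^[m](X) for every m ∈ ℕ}, i.e. a point x belongs to the attractor if and only if x lies in every iterate F^[m](X). -/
open Filter Topology Set

lemma wordMap_append {X I : Type*} (f : I → X → X) (w v : List I) :
    WordMap f (w ++ v) = WordMap f w ∘ WordMap f v := by
  induction w with
  | nil => rfl
  | cons i w ih => simp [WordMap, ih, Function.comp_assoc]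

lemma wordSet_cons {X I : Type*} (f : I → X → X) (i : I) (w : List I) :
    WordSet f (i :: w) = f i '' WordSet f w := by
  simp [WordSet, WordMap, Set.range_comp]

lemma pref_succ {I : Type*} (α : ℕ → I) (n : ℕ) :
    Pref α (n + 1) = Pref α n ++ [α n] := by
  simp only [Pref, List.ofFn_succ', Fin.coe_castSucc, Fin.val_last, List.concat_eq_append]

lemma wordSet_pref_antitone {X I : Type*} (f : I → X → X) (α : ℕ → I) (n : ℕ) :
    WordSet f (Pref α (n + 1)) ⊆ WordSet f (Pref α n) := by
  rw [pref_succ, WordSet, wordMap_append]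
  rintro x ⟨y, rfl⟩
  exact ⟨WordMap f [α n] y, rfl⟩

lemma mem_iterate_iff {X I : Type*} (f : I → X → X) (m : ℕ) (x : X) :
    x ∈ (fun C : Set X => ⋃ i : I, f i '' C)^[m] Set.univ ↔
      ∃ w : List I, w.length = m ∧ x ∈ WordSet f w := by
  induction m generalizing x with
  | zero =>
    simp only [Function.iterate_zero, id_eq, Set.mem_univ, true_iff]
    exact ⟨[], rfl, x, rfl⟩
  | succ m ih =>
    rw [Function.iterate_succ_apply']
    constructor
    · rintro hx
      simp only [Set.mem_iUnion, Set.mem_image] at hx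
      obtain ⟨i, y, hy, rfl⟩ := hx
      obtain ⟨w, hw, hyw⟩ := (ih y).mp hy
      exact ⟨i :: w, by simp [hw], by rw [wordSet_cons]; exact ⟨y, hyw, rfl⟩⟩
    · rintro ⟨w, hw, hxw⟩
      match w with
      | i :: w =>
        rw [wordSet_cons] at hxw
        obtain ⟨y, hy, rfl⟩ := hxw
        simp only [Set.mem_iUnion, Set.mem_image]
        exact ⟨i, y, (ih y).mpr ⟨w, by simpa using hw, hy⟩, rfl⟩

/-- **Proposition 3.5.** The attractor `A` consists exactly of the points which
lie in every iterate `F^[m](X)` of the set map `F(C) = ⋃ᵢ f_i(C)`. -/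
theorem attractor_eq_iInter_iterates {X I : Type*} [Finite I] [Nonempty I]
    (f : I → X → X) (hF : HasAttractor f) :
    {x : X | ∃ α : ℕ → I, ∀ n : ℕ, x ∈ WordSet f (Pref α n)} =
      {x : X | ∀ m : ℕ, x ∈ (fun C : Set X => ⋃ i : I, f i '' C)^[m] Set.univ} := by
  classical
  ext x
  simp only [Set.mem_setOf_eq]
  constructor
  · rintro ⟨α, hα⟩ m
    exact (mem_iterate_iff f m x).mpr ⟨Pref α m, by simp [Pref], hα m⟩
  · intro hx
    -- For each n, the set of infinite words whose prefix of length n captures x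
    letI : TopologicalSpace I := ⊥
    haveI : DiscreteTopology I := ⟨rfl⟩
    set S : ℕ → Set (ℕ → I) := fun n => {α | x ∈ WordSet f (Pref α n)} with hS
    have hne : ∀ n, (S n).Nonempty := by
      intro n
      obtain ⟨w, hw, hxw⟩ := (mem_iterate_iff f n x).mp (hx n)
      refine ⟨fun k => w.getD k (Classical.arbitrary I), ?_⟩
      have : Pref (fun k => w.getD k (Classical.arbitrary I)) n = w := by
        apply List.ext_getElem (by simp [Pref, hw])
        intro k h1 h2
        simp [Pref, List.getD_eq_getElem?_getD, List.getElem?_eq_getElem (by omega : k < w.length)]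
      show x ∈ WordSet f (Pref _ n)
      rw [this]; exact hxw
    have hanti : ∀ n, S (n + 1) ⊆ S n := fun n α hα =>
      wordSet_pref_antitone f α n hα
    have hclosed : ∀ n, IsClosed (S n) := by
      intro n
      have : S n = (fun α : ℕ → I => (fun k : Fin n => α (k : ℕ))) ⁻¹'
          {g : Fin n → I | x ∈ WordSet f (List.ofFn g)} := rfl
      rw [this]
      exact (isClosed_discrete _).preimage (by continuity)
    haveI : CompactSpace I := Finite.compactSpace
    have hcompact : IsCompact (S 0) := (hclosed 0).isCompact
    obtain ⟨α, hα⟩ := IsCompact.nonempty_iInter_of_sequence_nonempty_isCompact_isClosed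
      S hanti hne hcompact hclosed
    exact ⟨α, fun n => Set.mem_iInter.mp hα n⟩
end
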